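/- arXiv:0802.4095 — 2 statements merged into one kernel-verified Lean document; each statement's English description precedes it below -/
import Mathlib

section
/- Suppose μ(w) contains a factor u of period p with |u|/p > 2. Then p is even and w contains a factor v of length ⌈|u|/2⌉ with period p/2. -/
/-!
In `mu w` the two letters of each block `mu [b]` are complementary. If a factor `u` had an odd
period `p` with `2 * p < |u|`, then shifting by `p` would carry every position of `u` to one of
the other parity, so consecutive letters of `u` would differ along its first `p + 1` letters,
giving `u[p] ≠ u[0]` against the period. So `p` is even, and reading every second letter of `u`
(complemented when `u` starts in the middle of a block) yields a factor of `w` of length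
`⌈|u| / 2⌉` with period `p / 2`.
-/

/-- Thue–Morse morphism: 0 ↦ 01, 1 ↦ 10 (false = 0, true = 1). -/
def mu : List Bool → List Bool :=
  fun w => w.flatMap (fun b => if b then [true, false] else [false, true])

/-- `w` has period `p`: `w[i] = w[i+p]` whenever both defined. -/
def HasPeriod (w : List Bool) (p : ℕ) : Prop :=
  ∀ i, i + p < w.length → w[i]? = w[i + p]?

/-- `w` is α-power-free: no factor `u` has a period `p` with `|u|/p ≥ α`. -/
def PowerFree (α : ℝ) (w : List Bool) : Prop :=
  ∀ u p, u <:+: w → 0 < p → HasPeriod u p → (u.length : ℝ) / p < α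

/-- `𝓛`: factors of images of `mu`. -/
def InL (w : List Bool) : Prop := ∃ x, w <:+: mu x

theorem mu_length (w : List Bool) : (mu w).length = 2 * w.length := by
  induction w with
  | nil => rfl
  | cons b w ih => cases b <;> simp [mu] at * <;> omega

theorem getElem?_mu (w : List Bool) (k : ℕ) :
    (mu w)[k]? = w[k / 2]?.map (xor (k % 2 == 1)) := by
  induction w generalizing k with
  | nil => rfl
  | cons b w ih =>
    have hb : mu (b :: w) = b :: (!b) :: mu w := by cases b <;> rfl
    rcases k with _ | _ | k
    · simp [hb]
    · simp [hb]
    · have hdiv : (k + 2) / 2 = k / 2 + 1 := by omega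
      have hmod : (k + 2) % 2 = k % 2 := by omega
      simp only [hb, List.getElem?_cons_succ, ih, hdiv, hmod]

theorem List.getElem?_eq_map_iterate {α : Type*} {u : List α} {f : α → α} {k : ℕ}
    (h : ∀ j < k, u[j + 1]? = u[j]?.map f) : u[k]? = u[0]?.map (f^[k]) := by
  induction k with
  | zero => simp
  | succ k ih =>
    rw [h k k.lt_succ_self, ih fun j hj => h j (by omega), Option.map_map,
      Function.iterate_succ']

theorem List.IsInfix.exists_getElem?_eq {α : Type*} {u x : List α} (h : u <:+: x) :
    ∃ a, a + u.length ≤ x.length ∧ ∀ j < u.length, u[j]? = x[j + a]? := by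
  obtain ⟨a, hlen, ha⟩ := List.infix_iff_getElem?.mp h
  exact ⟨a, by omega, fun j hj => by rw [ha j hj, List.getElem?_eq_getElem hj]⟩

theorem exists_getElem?_succ_eq_not_of_infix_mu {u w : List Bool} (hu : u <:+: mu w) :
    ∃ a, ∀ j, j + 1 < u.length → Even (j + a) → u[j + 1]? = u[j]?.map not := by
  obtain ⟨a, -, ha⟩ := hu.exists_getElem?_eq
  refine ⟨a, fun j hj hja => ?_⟩
  rw [Nat.even_iff] at hja
  have hdiv : (j + 1 + a) / 2 = (j + a) / 2 := by omega
  have hodd : (j + 1 + a) % 2 = 1 := by omega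
  have heven : (j + a) % 2 = 0 := by omega
  rw [ha (j + 1) hj, ha j (by omega), getElem?_mu, getElem?_mu, hdiv, hodd, heven]
  rcases w[(j + a) / 2]? with _ | b <;> simp

theorem HasPeriod.even_of_getElem?_succ_eq_not {u : List Bool} {p a : ℕ} (hper : HasPeriod u p)
    (hlen : 2 * p < u.length)
    (halt : ∀ j, j + 1 < u.length → Even (j + a) → u[j + 1]? = u[j]?.map not) : Even p := by
  by_contra hodd
  rw [Nat.not_even_iff_odd] at hodd
  -- shifting by the odd period moves `j` to the other parity class
  have hstep : ∀ j < p, u[j + 1]? = u[j]?.map not := by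
    intro j hj
    by_cases hja : Even (j + a)
    · exact halt j (by omega) hja
    · have hshift := halt (j + p) (by omega) (by
        rw [Nat.not_even_iff_odd] at hja
        rw [Nat.add_right_comm]
        exact hja.add_odd hodd)
      rwa [Nat.add_right_comm, ← hper j (by omega), ← hper (j + 1) (by omega)] at hshift
  have hflip := List.getElem?_eq_map_iterate hstep
  have hperiod0 := hper 0 (by omega)
  rw [Nat.zero_add] at hperiod0
  rw [Bool.involutive_not.iterate_odd hodd, ← hperiod0] at hflip
  obtain ⟨b, hb⟩ : ∃ b, u[0]? = some b := ⟨u[0], List.getElem?_eq_getElem (by omega)⟩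
  simp [hb] at hflip

theorem HasPeriod.of_getElem?_mul_eq_map {u v : List Bool} {k q : ℕ} {f : Bool → Bool}
    (hf : Function.Injective f) (hvu : ∀ i, u[k * i]? = v[i]?.map f)
    (hper : HasPeriod u (k * q)) : HasPeriod v q := by
  intro i hi
  have hlen : k * i + k * q < u.length := by
    by_contra hge
    have hnone := hvu (i + q)
    rw [List.getElem?_eq_none (by rw [Nat.mul_add]; omega), eq_comm, Option.map_eq_none_iff,
      List.getElem?_eq_none_iff] at hnone
    omega
  apply Option.map_injective hf
  rw [← hvu, ← hvu, Nat.mul_add]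
  exact hper _ hlen

theorem exists_infix_of_infix_mu {u w : List Bool} (hu : u <:+: mu w) :
    ∃ v, v <:+: w ∧ v.length = (u.length + 1) / 2 ∧
      ∃ e, ∀ i, u[2 * i]? = v[i]?.map (xor e) := by
  obtain ⟨a, hlen, ha⟩ := hu.exists_getElem?_eq
  rw [mu_length] at hlen
  set v := (w.drop (a / 2)).take ((u.length + 1) / 2)
  have hvlen : v.length = (u.length + 1) / 2 := by simp [v]; omega
  refine ⟨v, (List.take_prefix _ _).isInfix.trans (List.drop_suffix _ _).isInfix, hvlen,
    a % 2 == 1, fun i => ?_⟩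
  by_cases hi : 2 * i < u.length
  · have hdiv : (2 * i + a) / 2 = a / 2 + i := by omega
    have hmod : (2 * i + a) % 2 = a % 2 := by omega
    rw [ha _ hi, getElem?_mu, hdiv, hmod, List.getElem?_take_of_lt (by omega),
      List.getElem?_drop]
  · rw [List.getElem?_eq_none (by omega), List.getElem?_eq_none (by omega), Option.map_none]

theorem factor_of_mu_desubstitution_general (w u : List Bool) (p : ℕ)
    (hu : u <:+: mu w) (hper : HasPeriod u p) (hexp : 2 < (u.length : ℝ) / p) :
    2 ∣ p ∧ ∃ v : List Bool, v <:+: w ∧ v.length = (u.length + 1) / 2 ∧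
      HasPeriod v (p / 2) := by
  have hlen : 2 * p < u.length := by
    rcases Nat.eq_zero_or_pos p with rfl | hp
    · norm_num at hexp
    · exact_mod_cast (lt_div_iff₀ (by exact_mod_cast hp)).mp hexp
  obtain ⟨a, halt⟩ := exists_getElem?_succ_eq_not_of_infix_mu hu
  obtain ⟨q, rfl⟩ := even_iff_two_dvd.mp (hper.even_of_getElem?_succ_eq_not hlen halt)
  obtain ⟨v, hv, hvlen, e, hvu⟩ := exists_infix_of_infix_mu hu
  refine ⟨dvd_mul_right 2 q, v, hv, hvlen, ?_⟩
  rw [Nat.mul_div_cancel_left q two_pos]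
  exact hper.of_getElem?_mul_eq_map (fun _ _ => Bool.xor_right_inj.mp) hvu

theorem factor_of_mu_desubstitution (w u : List Bool) (p : ℕ) (hp : 0 < p)
    (hu : u <:+: mu w) (hper : HasPeriod u p) (hexp : 2 < (u.length : ℝ) / p) :
    2 ∣ p ∧ ∃ v : List Bool, v <:+: w ∧ v.length = (u.length + 1) / 2 ∧
      HasPeriod v (p / 2) :=
  factor_of_mu_desubstitution_general w u p hu hper hexp
end

section
/- If w is a binary word with 00w ∈ 𝓛 and 00w is α-power-free (α > 2, r = ⌈α⌉), then μ^s(0^{r−1} w) is α-power-free for every positive integer s. -/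
theorem mu_cons (b : Bool) (x : List Bool) : mu (b :: x) = b :: (!b) :: mu x := by
  cases b <;> rfl

theorem length_mu (x : List Bool) : (mu x).length = 2 * x.length := by
  induction x with
  | nil => rfl
  | cons b x ih => simp only [mu_cons, List.length_cons, ih]; ring

theorem getElem?_mu_two_mul (x : List Bool) (k : ℕ) : (mu x)[2 * k]? = x[k]? := by
  induction x generalizing k with
  | nil => rfl
  | cons b x ih =>
    cases k with
    | zero => simp [mu_cons]
    | succ k => simpa [mu_cons, Nat.mul_succ] using ih k

theorem getElem?_mu_two_mul_add_one (x : List Bool) (k : ℕ) :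
    (mu x)[2 * k + 1]? = x[k]?.map not := by
  induction x generalizing k with
  | nil => rfl
  | cons b x ih =>
    cases k with
    | zero => simp [mu_cons]
    | succ k => simpa [mu_cons, Nat.mul_succ] using ih k

theorem getElem?_mu_ne_succ_of_even (x : List Bool) {n : ℕ} (hn : Even n)
    (h : n + 1 < (mu x).length) : (mu x)[n]? ≠ (mu x)[n + 1]? := by
  obtain ⟨k, rfl⟩ := hn
  have hk : k < x.length := by rw [length_mu] at h; omega
  rw [← two_mul, getElem?_mu_two_mul, getElem?_mu_two_mul_add_one, List.getElem?_eq_getElem hk]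
  simp

theorem not_cube_infix_mu (x : List Bool) (b : Bool) : ¬ [b, b, b] <:+: mu x := by
  intro h
  obtain ⟨k, hk, hget⟩ := List.infix_iff_getElem?.mp h
  have h0 : (mu x)[k]? = some b := by simpa using hget 0 (by simp)
  have h1 : (mu x)[k + 1]? = some b := by simpa [Nat.add_comm] using hget 1 (by simp)
  have h2 : (mu x)[k + 2]? = some b := by simpa [Nat.add_comm] using hget 2 (by simp)
  simp only [List.length_cons, List.length_nil] at hk
  rcases Nat.even_or_odd k with hk2 | hk2
  · exact getElem?_mu_ne_succ_of_even x hk2 (by omega) (h0.trans h1.symm)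
  · exact getElem?_mu_ne_succ_of_even x hk2.add_one (by omega) (h1.trans h2.symm)

theorem InL.not_cube_infix {z : List Bool} (hz : InL z) (b : Bool) : ¬ [b, b, b] <:+: z :=
  fun h => hz.elim fun x hx => not_cube_infix_mu x b (h.trans hx)

def PeriodicOn (v : List Bool) (t ℓ p : ℕ) : Prop :=
  ∀ i, i + p < ℓ → v[t + i]? = v[t + i + p]?

theorem powerFree_iff_periodicOn {α : ℝ} {v : List Bool} : PowerFree α v ↔
    ∀ t ℓ p : ℕ, 0 < p → t + ℓ ≤ v.length → α * p ≤ ℓ → ¬ PeriodicOn v t ℓ p := by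
  have hwin : ∀ t ℓ, t + ℓ ≤ v.length → ((v.drop t).take ℓ).length = ℓ := by
    intro t ℓ h; simp only [List.length_take, List.length_drop]; omega
  constructor
  · intro H t ℓ p hp hle hαp hper
    refine (H ((v.drop t).take ℓ) p ((List.take_prefix _ _).isInfix.trans
      (List.drop_suffix t v).isInfix) hp fun i hi => ?_).not_ge ?_
    · rw [hwin t ℓ hle] at hi
      simp only [List.getElem?_take, List.getElem?_drop, if_pos hi, if_pos (show i < ℓ by omega)]
      rw [← Nat.add_assoc]
      exact hper i hi
    · rwa [hwin t ℓ hle, le_div_iff₀ (by exact_mod_cast hp)]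
  · intro H u p hu hp hper
    obtain ⟨t, hle, hget⟩ := List.infix_iff_getElem?.mp hu
    rw [div_lt_iff₀ (by exact_mod_cast hp)]
    by_contra! hαp
    refine H t u.length p hp (by omega) hαp fun i hi => ?_
    rw [Nat.add_comm t i, Nat.add_right_comm, hget i (by omega), hget (i + p) hi,
      ← List.getElem?_eq_getElem, ← List.getElem?_eq_getElem]
    exact hper i hi

theorem PeriodicOn.of_append {y z : List Bool} {t ℓ p : ℕ}
    (h : PeriodicOn (y ++ z) (y.length + t) ℓ p) : PeriodicOn z t ℓ p := by
  intro i hi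
  have := h i hi
  rwa [Nat.add_assoc, Nat.add_assoc, List.getElem?_append_right (by omega),
    List.getElem?_append_right (by omega), Nat.add_sub_cancel_left, Nat.add_sub_cancel_left] at this

theorem two_mul_lt_of_mul_le {α : ℝ} (hα : 2 < α) {p ℓ : ℕ} (hp : 0 < p) (h : α * p ≤ ℓ) :
    2 * p < ℓ := by
  have : (2 : ℝ) * p < ℓ := lt_of_lt_of_le (by gcongr) h
  exact_mod_cast this

theorem PeriodicOn.exists_of_mu {x : List Bool} {t ℓ q : ℕ} (h : PeriodicOn (mu x) t ℓ (2 * q))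
    (hℓ : 2 * q < ℓ) (hle : t + ℓ ≤ (mu x).length) :
    ∃ t' L, t' + L ≤ x.length ∧ ℓ ≤ 2 * L ∧ PeriodicOn x t' L q := by
  rw [length_mu] at hle
  refine ⟨t / 2, (t + ℓ + 1) / 2 - t / 2, by omega, by omega, fun i hi => ?_⟩
  set k := t / 2 + i
  by_cases hkt : t ≤ 2 * k
  · have := h (2 * k - t) (by omega)
    rwa [Nat.add_sub_cancel' hkt, ← Nat.mul_add, getElem?_mu_two_mul,
      getElem?_mu_two_mul] at this
  · have := h 0 (by omega)
    rw [show t + 0 + 2 * q = 2 * (k + q) + 1 by omega, show t + 0 = 2 * k + 1 by omega,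
      getElem?_mu_two_mul_add_one, getElem?_mu_two_mul_add_one] at this
    exact Option.map_injective Bool.not_injective this

theorem getElem?_add_eq_iff_even {v : List Bool} {t n : ℕ} (hn : t + n < v.length)
    (halt : ∀ j < n, v[t + j]? ≠ v[t + j + 1]?) : v[t + n]? = v[t]? ↔ Even n := by
  induction n with
  | zero => simp
  | succ n ih =>
    have ih := ih (by omega) fun j hj => halt j (by omega)
    have hne := halt n (by omega)
    rw [← Nat.add_assoc, List.getElem?_eq_getElem hn,
      List.getElem?_eq_getElem (by omega : t + n < v.length),
      List.getElem?_eq_getElem (by omega : t < v.length)] at *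
    simp only [Option.some.injEq, ne_eq] at ih hne ⊢
    rw [Nat.even_add_one, ← ih]
    revert hne
    generalize v[t + n] = b
    generalize v[t + n + 1] = c
    generalize v[t] = a
    decide +revert

theorem not_periodicOn_mu_of_odd {x : List Bool} {t ℓ p : ℕ} (hp : Odd p) (hℓ : 2 * p < ℓ)
    (hle : t + ℓ ≤ (mu x).length) : ¬ PeriodicOn (mu x) t ℓ p := by
  intro h
  by_cases hrep : ∃ j < p, (mu x)[t + j]? = (mu x)[t + j + 1]?
  · -- a repeated letter starts at an odd position, so its copy `p` places later starts at an even one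
    obtain ⟨j, hj, heq⟩ := hrep
    have hodd : Odd (t + j) := by
      by_contra hev
      exact getElem?_mu_ne_succ_of_even x (Nat.not_odd_iff_even.mp hev) (by omega) heq
    refine getElem?_mu_ne_succ_of_even x (hodd.add_odd hp) (by omega) ?_
    have hnext := h (j + 1) (by omega)
    rw [← Nat.add_assoc, Nat.add_right_comm (t + j) 1 p] at hnext
    rw [← h j (by omega), heq, hnext]
  · push Not at hrep
    have hper := h 0 (by omega)
    rw [Nat.add_zero] at hper
    exact Nat.not_even_iff_odd.mpr hp ((getElem?_add_eq_iff_even (by omega) hrep).mp hper.symm)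

theorem PowerFree.mu {α : ℝ} (hα : 2 < α) {x : List Bool} (hx : PowerFree α x) :
    PowerFree α (mu x) := by
  rw [powerFree_iff_periodicOn] at hx ⊢
  intro t ℓ p hp hle hαp hper
  have hℓ := two_mul_lt_of_mul_le hα hp hαp
  rcases Nat.even_or_odd' p with ⟨q, rfl | rfl⟩
  · obtain ⟨t', L, hle', hL, hper'⟩ := hper.exists_of_mu (by omega) hle
    refine hx t' L q (by omega) hle' ?_ hper'
    have : (ℓ : ℝ) ≤ 2 * L := by exact_mod_cast hL
    push_cast at hαp
    linarith
  · exact not_periodicOn_mu_of_odd (odd_two_mul_add_one q) hℓ hle hper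

theorem cube_infix_of_getElem? {y z : List Bool} {n : ℕ} {b : Bool} (hn : y.length ≤ n)
    (h : ∀ c < 3, (y ++ z)[n + c]? = some b) : [b, b, b] <:+: z := by
  have hlen : n + 2 < (y ++ z).length := (List.getElem?_eq_some_iff.mp (h 2 (by omega))).1
  refine List.infix_iff_getElem?.mpr ⟨n - y.length, ?_, fun i hi => ?_⟩
  · simp only [List.length_append, List.length_cons, List.length_nil] at hlen ⊢
    omega
  · have := h i hi
    rw [List.getElem?_append_right (by omega)] at this
    rw [show i + (n - y.length) = n + i - y.length by omega, this]
    simp only [List.length_cons, List.length_nil] at hi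
    interval_cases i <;> rfl

theorem PowerFree.replicate_append {α : ℝ} (hα : 2 < α) {w : List Bool}
    (hcube : ¬ [false, false, false] <:+: [false, false] ++ w)
    (hfree : PowerFree α ([false, false] ++ w)) :
    PowerFree α (List.replicate (⌈α⌉₊ - 1) false ++ w) := by
  set m := ⌈α⌉₊ - 1
  set v := List.replicate m false ++ w
  have hm : 2 ≤ m := by
    have := Nat.lt_ceil.mpr (show ((2 : ℕ) : ℝ) < α by exact_mod_cast hα)
    omega
  have hv : v = List.replicate (m - 2) false ++ ([false, false] ++ w) := by
    rw [← List.append_assoc, show [false, false] = List.replicate 2 false from rfl,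
      ← List.replicate_add, Nat.sub_add_cancel hm]
  have hprefix : ∀ n < m, v[n]? = some false := fun n hn => by
    rw [List.getElem?_append_left (by simpa using hn), List.getElem?_replicate, if_pos hn]
  have hcube_v : ∀ n, m - 2 ≤ n → (∀ c < 3, v[n + c]? = some false) → False := fun n hn h =>
    hcube (cube_infix_of_getElem? (by simpa using hn) (hv ▸ h))
  rw [powerFree_iff_periodicOn] at hfree ⊢
  intro t ℓ p hp hle hαp hper
  have hℓ := two_mul_lt_of_mul_le hα hp hαp
  have hmℓ : m < ℓ := by
    have : α ≤ ℓ := le_trans (le_mul_of_one_le_right (by linarith) (by exact_mod_cast hp)) hαp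
    have := Nat.ceil_le.mpr this
    omega
  by_cases ht : m - 2 ≤ t
  · rw [hv] at hper hle
    obtain ⟨t', rfl⟩ : ∃ t', t = (List.replicate (m - 2) false).length + t' :=
      ⟨t - (m - 2), by rw [List.length_replicate]; omega⟩
    rw [List.length_append, List.length_replicate] at hle
    exact hfree t' ℓ p hp (by omega) hαp hper.of_append
  · by_cases hpm : p ≤ m - t
    · -- periodicity copies the zero `v[m - p]` onto `v[m]`, the first letter of `w`
      refine hcube_v (m - 2) le_rfl fun c hc => ?_
      by_cases hc2 : c < 2
      · exact hprefix _ (by omega)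
      · rw [show m - 2 + c = t + (m - t - p) + p by omega, ← hper (m - t - p) (by omega)]
        exact hprefix _ (by omega)
    · -- the zeros at `t, t + 1, t + 2` are copied into `w`
      refine hcube_v (t + p) (by omega) fun c hc => ?_
      rw [Nat.add_right_comm, ← hper c (by omega)]
      exact hprefix _ (by omega)

theorem mu_iter_powerFree_general (α : ℝ) (hα : 2 < α) (r : ℕ) (hr : r = ⌈α⌉₊)
    (w : List Bool) (hL : InL ([false, false] ++ w))
    (hfree : PowerFree α ([false, false] ++ w)) (s : ℕ) :
    PowerFree α (mu^[s] (List.replicate (r - 1) false ++ w)) := by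
  subst hr
  induction s with
  | zero => exact PowerFree.replicate_append hα (hL.not_cube_infix false) hfree
  | succ n ih =>
    rw [Function.iterate_succ_apply']
    exact ih.mu hα

theorem mu_iter_powerFree (α : ℝ) (hα : 2 < α) (r : ℕ) (hr : r = ⌈α⌉₊)
    (w : List Bool) (hL : InL ([false, false] ++ w))
    (hfree : PowerFree α ([false, false] ++ w)) (s : ℕ) (hs : 0 < s) :
    PowerFree α (mu^[s] (List.replicate (r - 1) false ++ w)) :=
  mu_iter_powerFree_general α hα r hr w hL hfree s
end
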